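/- arXiv:2212.01963 — 3 statements merged into one kernel-verified Lean document; each statement's English description precedes it below -/
import Mathlib

section
/- Let q_a = (0, p_a), q_b = (0, p_b) be pure unit quaternions with angle θ ∈ (0, π) between p_a and p_b. Then for every t ∈ [0,1], the quaternion SLERP q_a ((q_a)⁻¹ q_b)ᵗ is a pure quaternion (0, p(t)) with ‖p(t)‖ = 1. -/
open Matrix Real

noncomputable def quat (a : ℝ) (u : Fin 3 → ℝ) : Quaternion ℝ := ⟨a, u 0, u 1, u 2⟩

noncomputable def norm3 (u : Fin 3 → ℝ) : ℝ := Real.sqrt (u ⬝ᵥ u)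

/-- The real power `r^t` of the unit quaternion `r = (cos k, sin k · w)`
(with `w` a unit vector), namely `(cos (t k), sin (t k) • w)`. -/
noncomputable def qpow (k : ℝ) (w : Fin 3 → ℝ) (t : ℝ) : Quaternion ℝ :=
  quat (Real.cos (t * k)) (Real.sin (t * k) • w)

/-!
Write `p_b = cos θ • p_a + sin θ • e` with `e ⟂ p_a` a unit vector. The rotation axis is
`w = -(p_a × p_b) / sin θ`, and `p_a × w = e`, so the Hamilton product `q_a rᵗ` has real part
`-(p_a ⬝ sin(tθ) w) = 0` and vector part `cos(tθ) p_a + sin(tθ) e`, a point of the great circle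
through the orthonormal pair `p_a, e`.
-/

theorem quat_mul_quat (a b : ℝ) (u v : Fin 3 → ℝ) :
    quat a u * quat b v = quat (a * b - u ⬝ᵥ v) (a • v + b • u + u ⨯₃ v) := by
  apply Quaternion.ext <;>
    simp only [Quaternion.re_mul, Quaternion.imI_mul, Quaternion.imJ_mul, Quaternion.imK_mul] <;>
    simp [quat, cross_apply, vec3_dotProduct] <;> ring

theorem norm3_eq_one_iff {u : Fin 3 → ℝ} : norm3 u = 1 ↔ u ⬝ᵥ u = 1 := by
  rw [norm3, Real.sqrt_eq_one]

section Orthonormal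

variable {n : Type*} [Fintype n] {a b e : n → ℝ}

theorem dotProduct_self_cos_smul_add_sin_smul (ha : a ⬝ᵥ a = 1) (he : e ⬝ᵥ e = 1)
    (hae : a ⬝ᵥ e = 0) (φ : ℝ) :
    (cos φ • a + sin φ • e) ⬝ᵥ (cos φ • a + sin φ • e) = 1 := by
  simp only [dotProduct_add, add_dotProduct, dotProduct_smul, smul_dotProduct, smul_eq_mul,
    dotProduct_comm e a, ha, he, hae]
  linear_combination sin_sq_add_cos_sq φ

variable {θ : ℝ}

theorem dotProduct_sub_cos_smul_eq_zero (ha : a ⬝ᵥ a = 1) (hab : a ⬝ᵥ b = cos θ) :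
    a ⬝ᵥ (b - cos θ • a) = 0 := by
  rw [dotProduct_sub, dotProduct_smul, ha, hab, smul_eq_mul, mul_one, sub_self]

theorem dotProduct_self_sub_cos_smul (ha : a ⬝ᵥ a = 1) (hb : b ⬝ᵥ b = 1)
    (hab : a ⬝ᵥ b = cos θ) :
    (b - cos θ • a) ⬝ᵥ (b - cos θ • a) = sin θ ^ 2 := by
  simp only [dotProduct_sub, sub_dotProduct, dotProduct_smul, smul_dotProduct, smul_eq_mul,
    dotProduct_comm b a, ha, hb, hab]
  linear_combination -sin_sq_add_cos_sq θ

end Orthonormal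

theorem cross_smul_neg_cross {θ : ℝ} {a b : Fin 3 → ℝ} (ha : a ⬝ᵥ a = 1)
    (hab : a ⬝ᵥ b = cos θ) :
    a ⨯₃ ((sin θ)⁻¹ • -(a ⨯₃ b)) = (sin θ)⁻¹ • (b - cos θ • a) := by
  rw [map_smul, map_neg, cross_cross_eq_smul_sub_smul', ha, hab, one_smul, neg_sub]

/-- Quaternion SLERP `q_a ((q_a)⁻¹ q_b)ᵗ` between pure unit quaternions stays a
pure unit quaternion.  Here `(q_a)⁻¹ q_b = (cos θ, sin θ • w)` with
`w = −(p_a × p_b)/sin θ`. -/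
theorem quaternion_slerp_pure_unit (θ : ℝ) (pa pb : Fin 3 → ℝ)
    (hpa : norm3 pa = 1) (hpb : norm3 pb = 1)
    (hθ : 0 < θ) (hθπ : θ < Real.pi) (hdot : pa ⬝ᵥ pb = Real.cos θ) :
    ∀ t ∈ Set.Icc (0 : ℝ) 1,
      ∃ p : Fin 3 → ℝ,
        quat 0 pa * qpow θ ((Real.sin θ)⁻¹ • (-(crossProduct pa pb))) t = quat 0 p ∧
        norm3 p = 1 := by
  intro t _
  rw [norm3_eq_one_iff] at hpa hpb
  have hsin : sin θ ≠ 0 := (sin_pos_of_pos_of_lt_pi hθ hθπ).ne'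
  set e := (sin θ)⁻¹ • (pb - cos θ • pa) with he_def
  have hpae : pa ⬝ᵥ e = 0 := by
    rw [he_def, dotProduct_smul, dotProduct_sub_cos_smul_eq_zero hpa hdot, smul_zero]
  have hee : e ⬝ᵥ e = 1 := by
    rw [he_def, dotProduct_smul, smul_dotProduct, dotProduct_self_sub_cos_smul hpa hpb hdot,
      smul_eq_mul, smul_eq_mul]
    field_simp
  refine ⟨cos (t * θ) • pa + sin (t * θ) • e, ?_,
    norm3_eq_one_iff.2 (dotProduct_self_cos_smul_add_sin_smul hpa hee hpae _)⟩
  rw [qpow, quat_mul_quat, map_smul, cross_smul_neg_cross hpa hdot, dotProduct_smul,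
    dotProduct_smul, dotProduct_neg, dot_self_cross]
  simp [e]
end

section
/- The quaternion SLERP formula agrees with the trigonometric formula: for pure unit quaternions q_a = (0, p_a), q_b = (0, p_b) with angle θ ∈ (0, π) between p_a and p_b, the vector part of q_a ((q_a)⁻¹ q_b)ᵗ equals (sin((1−t)θ)/sin θ) p_a + (sin(tθ)/sin θ) p_b for all t ∈ [0,1]. -/
open Matrix Real

def vec (q : Quaternion ℝ) : Fin 3 → ℝ := ![q.imI, q.imJ, q.imK]

/-!
For pure `q_a = (0, p_a)` the vector part of `q_a (c, s w)` is `c p_a + s (p_a × w)`. With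
`w = (p_b × p_a) / sin θ`, the triple product expansion together with `p_a · p_a = 1` and
`p_a · p_b = cos θ` gives `p_a × w = (p_b - cos θ p_a) / sin θ`, and the subtraction formula
`sin((1 - t)θ) = sin θ cos tθ - cos θ sin tθ` matches the coefficients.
-/

theorem vec_quat_mul_quat (a b : ℝ) (u v : Fin 3 → ℝ) :
    vec (quat a u * quat b v) = a • v + b • u + u ⨯₃ v := by
  simp only [_root_.vec, Quaternion.imI_mul, Quaternion.imJ_mul, Quaternion.imK_mul]
  ext i
  fin_cases i <;> simp [quat, cross_apply] <;> ring

theorem dotProduct_self_eq_one_of_norm3_eq_one {u : Fin 3 → ℝ} (hu : norm3 u = 1) :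
    u ⬝ᵥ u = 1 := by
  rwa [norm3, Real.sqrt_eq_one] at hu

theorem cross_neg_cross_of_dotProduct_self_eq_one {R : Type*} [CommRing R] {u : Fin 3 → R}
    (hu : u ⬝ᵥ u = 1) (v : Fin 3 → R) : u ⨯₃ -(u ⨯₃ v) = v - (u ⬝ᵥ v) • u := by
  rw [map_neg, cross_cross_eq_smul_sub_smul', hu, one_smul, neg_sub]

theorem quaternion_slerp_eq_trig_slerp_general (θ : ℝ) (pa pb : Fin 3 → ℝ)
    (hpa : norm3 pa = 1)
    (hθ : 0 < θ) (hθπ : θ < Real.pi) (hdot : pa ⬝ᵥ pb = Real.cos θ) :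
    ∀ t ∈ Set.Icc (0 : ℝ) 1,
      vec (quat 0 pa * qpow θ ((Real.sin θ)⁻¹ • (-(pa ⨯₃ pb))) t) =
        (Real.sin ((1 - t) * θ) / Real.sin θ) • pa +
          (Real.sin (t * θ) / Real.sin θ) • pb := by
  intro t _
  have hsin : sin θ ≠ 0 := (sin_pos_of_pos_of_lt_pi hθ hθπ).ne'
  have hsub : sin ((1 - t) * θ) = sin θ * cos (t * θ) - cos θ * sin (t * θ) := by
    rw [show (1 - t) * θ = θ - t * θ by ring, sin_sub]
  have hpa_unit := dotProduct_self_eq_one_of_norm3_eq_one hpa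
  rw [qpow, vec_quat_mul_quat, map_smul, map_smul,
    cross_neg_cross_of_dotProduct_self_eq_one hpa_unit, hdot, hsub]
  match_scalars <;> field_simp <;> ring

/-- The quaternion SLERP formula agrees with the trigonometric SLERP formula:
the vector part of `q_a ((q_a)⁻¹ q_b)ᵗ` is
`(sin((1−t)θ)/sin θ) p_a + (sin(tθ)/sin θ) p_b`. -/
theorem quaternion_slerp_eq_trig_slerp (θ : ℝ) (pa pb : Fin 3 → ℝ)
    (hpa : norm3 pa = 1) (hpb : norm3 pb = 1)
    (hθ : 0 < θ) (hθπ : θ < Real.pi) (hdot : pa ⬝ᵥ pb = Real.cos θ) :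
    ∀ t ∈ Set.Icc (0 : ℝ) 1,
      vec (quat 0 pa * qpow θ ((Real.sin θ)⁻¹ • (-(pa ⨯₃ pb))) t) =
        (Real.sin ((1 - t) * θ) / Real.sin θ) • pa +
          (Real.sin (t * θ) / Real.sin θ) • pb :=
  quaternion_slerp_eq_trig_slerp_general θ pa pb hpa hθ hθπ hdot
end

section
/- Define SIDER2 control points via geodesic extrapolation: for unit vectors p₁, p₂, p₃ ∈ ℝ³ (pairwise at angles in (0, π/2)), let c_{2a} = SLERP(p₃, p₂, 2) and c_{2b} = SLERP(p₁, p₂, 2), where SLERP(x, y, t) = (sin((1−t)φ)/sin φ) x + (sin(tφ)/sin φ) y with φ the angle between x and y. Then the midpoint along the geodesic between p₁ and c_{2a}, SLERP-interpolated at t = 1/2 with the midpoint between c_{2b} and p₃, gives p₂; i.e., SLERP(SLERP(p₁, c_{2a}, 1/2), SLERP(c_{2b}, p₃, 1/2), 1/2) = p₂. -/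
open Matrix Real

noncomputable def ang (x y : Fin 3 → ℝ) : ℝ := Real.arccos (x ⬝ᵥ y)

/-- SLERP with the angle computed from the endpoints; `t` outside `[0,1]`
denotes geodesic extrapolation by the same formula. -/
noncomputable def slerp (x y : Fin 3 → ℝ) (t : ℝ) : Fin 3 → ℝ :=
  (Real.sin ((1 - t) * ang x y) / Real.sin (ang x y)) • x +
    (Real.sin (t * ang x y) / Real.sin (ang x y)) • y

private lemma arccos_facts {d : ℝ} (h : Real.arccos d ∈ Set.Ioo 0 (Real.pi / 2)) :
    0 < d ∧ d < 1 ∧ Real.cos (Real.arccos d) = d := by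
  have h1 : 0 < d := Real.arccos_lt_pi_div_two.mp h.2
  have h2 : d < 1 := Real.arccos_pos.mp h.1
  exact ⟨h1, h2, Real.cos_arccos (by linarith) (by linarith)⟩

private lemma slerp_two (x y : Fin 3 → ℝ) (h : ang x y ∈ Set.Ioo 0 (Real.pi / 2)) :
    slerp x y 2 = (2 * Real.cos (ang x y)) • y - x := by
  have hπ := Real.pi_pos
  have hs : 0 < Real.sin (ang x y) :=
    Real.sin_pos_of_pos_of_lt_pi h.1 (by linarith [h.2])
  have h1 : (1 - (2:ℝ)) * ang x y = -(ang x y) := by ring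
  have h2 : Real.sin ((2:ℝ) * ang x y) = 2 * Real.sin (ang x y) * Real.cos (ang x y) :=
    Real.sin_two_mul _
  unfold slerp
  rw [h1, Real.sin_neg, h2]
  funext i
  simp only [Pi.add_apply, Pi.sub_apply, Pi.smul_apply, smul_eq_mul]
  field_simp
  ring

private lemma slerp_half (x y : Fin 3 → ℝ) (h : ang x y ∈ Set.Ioo 0 (Real.pi / 2)) :
    slerp x y (1 / 2) = (1 / (2 * Real.cos (ang x y / 2))) • (x + y) := by
  have hπ := Real.pi_pos
  have hc : 0 < Real.cos (ang x y / 2) :=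
    Real.cos_pos_of_mem_Ioo ⟨by linarith [h.1], by linarith [h.2]⟩
  have hs2 : 0 < Real.sin (ang x y / 2) :=
    Real.sin_pos_of_pos_of_lt_pi (by linarith [h.1]) (by linarith [h.2])
  have hsin : Real.sin (ang x y) = 2 * Real.sin (ang x y / 2) * Real.cos (ang x y / 2) := by
    have := Real.sin_two_mul (ang x y / 2)
    rw [show 2 * (ang x y / 2) = ang x y by ring] at this
    linarith
  have h1 : (1 - (1:ℝ) / 2) * ang x y = ang x y / 2 := by ring
  have h2 : (1:ℝ) / 2 * ang x y = ang x y / 2 := by ring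
  unfold slerp
  rw [h1, h2, hsin]
  funext i
  simp only [Pi.add_apply, Pi.smul_apply, smul_eq_mul]
  field_simp

set_option maxHeartbeats 1000000 in
/-- SIDER2 interpolation property: with control points `c_{2a} = SLERP(p₃, p₂, 2)`
and `c_{2b} = SLERP(p₁, p₂, 2)`, the midpoint of the midpoints
`SLERP(SLERP(p₁, c_{2a}, 1/2), SLERP(c_{2b}, p₃, 1/2), 1/2)` equals `p₂`. -/
theorem sider2_midpoint (p₁ p₂ p₃ : Fin 3 → ℝ)
    (h1 : norm3 p₁ = 1) (h2 : norm3 p₂ = 1) (h3 : norm3 p₃ = 1)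
    (h12 : ang p₁ p₂ ∈ Set.Ioo 0 (Real.pi / 2))
    (h23 : ang p₂ p₃ ∈ Set.Ioo 0 (Real.pi / 2))
    (h13 : ang p₁ p₃ ∈ Set.Ioo 0 (Real.pi / 2))
    (ha : ang p₁ (slerp p₃ p₂ 2) ∈ Set.Ioo 0 (Real.pi / 2))
    (hb : ang (slerp p₁ p₂ 2) p₃ ∈ Set.Ioo 0 (Real.pi / 2))
    (hm : ang (slerp p₁ (slerp p₃ p₂ 2) (1 / 2)) (slerp (slerp p₁ p₂ 2) p₃ (1 / 2)) ∈
      Set.Ioo 0 (Real.pi / 2)) :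
    slerp (slerp p₁ (slerp p₃ p₂ 2) (1 / 2)) (slerp (slerp p₁ p₂ 2) p₃ (1 / 2)) (1 / 2)
      = p₂ := by
  have hπ := Real.pi_pos
  -- unit norms
  have u1 : p₁ ⬝ᵥ p₁ = 1 := Real.sqrt_eq_one.mp h1
  have u2 : p₂ ⬝ᵥ p₂ = 1 := Real.sqrt_eq_one.mp h2
  have u3 : p₃ ⬝ᵥ p₃ = 1 := Real.sqrt_eq_one.mp h3
  -- dot products
  obtain ⟨ha12, hb12, hc12⟩ := arccos_facts h12
  obtain ⟨ha23, hb23, hc23⟩ := arccos_facts h23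
  -- angles are symmetric
  have hsym : ang p₃ p₂ = ang p₂ p₃ := by unfold ang; rw [dotProduct_comm]
  have hsym' : ang p₁ p₂ = ang p₂ p₁ := by unfold ang; rw [dotProduct_comm]
  -- control points
  have hc2a : slerp p₃ p₂ 2 = (2 * (p₂ ⬝ᵥ p₃)) • p₂ - p₃ := by
    rw [slerp_two p₃ p₂ (by rwa [hsym]), hsym]
    exact congrArg (fun r => (2 * r) • p₂ - p₃) hc23
  have hc2b : slerp p₁ p₂ 2 = (2 * (p₁ ⬝ᵥ p₂)) • p₂ - p₁ := by
    rw [slerp_two p₁ p₂ h12]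
    exact congrArg (fun r => (2 * r) • p₂ - p₁) hc12
  set a := p₁ ⬝ᵥ p₂ with haa
  set b := p₂ ⬝ᵥ p₃ with hbb
  set c := p₁ ⬝ᵥ p₃ with hcc
  set A : Fin 3 → ℝ := (2 * b) • p₂ - p₃ with hA
  set B : Fin 3 → ℝ := (2 * a) • p₂ - p₁ with hB
  rw [hc2a] at ha hm ⊢
  rw [hc2b] at hb hm ⊢
  -- dot of p₁ with A and of B with p₃
  have hd1 : p₁ ⬝ᵥ A = 2 * a * b - c := by
    rw [hA, dotProduct_sub, dotProduct_smul, smul_eq_mul, ← haa, ← hcc]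
    ring
  have hd2 : B ⬝ᵥ p₃ = 2 * a * b - c := by
    rw [hB, sub_dotProduct, smul_dotProduct, smul_eq_mul, ← hbb, ← hcc]
  have hangB : ang B p₃ = ang p₁ A := by unfold ang; rw [hd1, hd2]
  obtain ⟨hda, hdb, hdc⟩ := arccos_facts (show Real.arccos (p₁ ⬝ᵥ A) ∈ _ from ha)
  rw [hd1] at hda hdb
  -- the common normalization constant K
  set K := Real.cos (ang p₁ A / 2) with hK
  have hKpos : 0 < K := by
    rw [hK]
    exact Real.cos_pos_of_mem_Ioo ⟨by linarith [ha.1], by linarith [ha.2]⟩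
  have hK0 : K ≠ 0 := ne_of_gt hKpos
  have hKsq : K ^ 2 = (1 + (2 * a * b - c)) / 2 := by
    rw [hK, Real.cos_sq]
    rw [show 2 * (ang p₁ A / 2) = ang p₁ A by ring]
    unfold ang
    rw [hdc, hd1]
    ring
  -- midpoints
  have hma : slerp p₁ A (1 / 2) = (1 / (2 * K)) • (p₁ + A) := slerp_half p₁ A ha
  have hmb : slerp B p₃ (1 / 2) = (1 / (2 * K)) • (B + p₃) := by
    rw [slerp_half B p₃ hb, hangB]
  rw [hma, hmb] at hm ⊢
  set v : Fin 3 → ℝ := (1 / (2 * K)) • (p₁ + A) with hv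
  set w : Fin 3 → ℝ := (1 / (2 * K)) • (B + p₃) with hw
  -- dot product of the midpoints
  have hN : (p₁ + A) ⬝ᵥ (B + p₃) = 2 * a ^ 2 + 2 * b ^ 2 + 2 * c - 2 := by
    rw [hA, hB]
    simp only [dotProduct_add, add_dotProduct, dotProduct_sub, sub_dotProduct,
      dotProduct_smul, smul_dotProduct, smul_eq_mul]
    rw [dotProduct_comm p₂ p₁, dotProduct_comm p₃ p₁, dotProduct_comm p₃ p₂]
    rw [← haa, ← hbb, ← hcc, u1, u2, u3]
    ring
  have hvw' : 4 * K ^ 2 * (v ⬝ᵥ w) = 2 * a ^ 2 + 2 * b ^ 2 + 2 * c - 2 := by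
    rw [hv, hw, smul_dotProduct, dotProduct_smul, smul_eq_mul, smul_eq_mul, hN]
    field_simp
    ring
  obtain ⟨hDa, hDb, hDc⟩ := arccos_facts (show Real.arccos (v ⬝ᵥ w) ∈ _ from hm)
  set L := Real.cos (ang v w / 2) with hL
  have hLpos : 0 < L := by
    rw [hL]
    exact Real.cos_pos_of_mem_Ioo ⟨by linarith [hm.1], by linarith [hm.2]⟩
  have hL0 : L ≠ 0 := ne_of_gt hLpos
  have hLsq : L ^ 2 = (1 + v ⬝ᵥ w) / 2 := by
    rw [hL, Real.cos_sq]
    rw [show 2 * (ang v w / 2) = ang v w by ring]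
    unfold ang
    rw [hDc]
    ring
  -- key scalar identity : 2 L K = a + b
  have habpos : 0 < a + b := by linarith
  have hkey : 2 * L * K = a + b := by
    have hsq : (2 * L * K) ^ 2 = (a + b) ^ 2 := by
      linear_combination 4 * K ^ 2 * hLsq + (1/2) * hvw' + 2 * hKsq
    have h2LK : 0 < 2 * L * K := by positivity
    have hfac : (2 * L * K - (a + b)) * (2 * L * K + (a + b)) = 0 := by
      linear_combination hsq
    rcases mul_eq_zero.mp hfac with h | h
    · linarith only [h]
    · exact absurd h (by linarith only [h2LK, habpos])
  -- final computation
  rw [slerp_half v w hm, ← hL]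
  have hsum : p₁ + A + (B + p₃) = (2 * (a + b)) • p₂ := by
    rw [hA, hB]
    funext i
    simp only [Pi.add_apply, Pi.sub_apply, Pi.smul_apply, smul_eq_mul]
    ring
  have hvwsum : v + w = (1 / (2 * K)) • ((2 * (a + b)) • p₂) := by
    rw [hv, hw, ← smul_add, hsum]
  rw [hvwsum, smul_smul, smul_smul]
  have hone : 1 / (2 * L) * (1 / (2 * K)) * (2 * (a + b)) = 1 := by
    rw [← hkey]
    field_simp
  rw [hone, one_smul]
end
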